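/- Strengthening for the id probe: if t ⇒^{φ∪{x},μ}_{id(x)} t' in λ_sn+, then t ⇒^{φ,μ}_{id(x)} t' (necessarily with t' = t). -/

import Mathlib

inductive Tm : Type
  | var : ℕ → Tm
  | lam : ℕ → Tm → Tm
  | app : Tm → Tm → Tm
  | es  : ℕ → Tm → Tm → Tm
  deriving DecidableEq

/-- Meta-level substitution `t{x := u}`. -/
def subst (x : ℕ) (u : Tm) : Tm → Tm
  | .var y => if y = x then u else .var y
  | .lam y t => if y = x then .lam y t else .lam y (subst x u t)
  | .app t s => .app (subst x u t) (subst x u s)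
  | .es y t s =>
      if y = x then .es y t (subst x u s)
      else .es y (subst x u t) (subst x u s)

/-- Unfolding `t★`. -/
def unfold : Tm → Tm
  | .var x => .var x
  | .lam x t => .lam x (unfold t)
  | .app t u => .app (unfold t) (unfold u)
  | .es x t u => subst x (unfold u) (unfold t)

/-- β-reduction of the pure λ-calculus. -/
inductive Beta : Tm → Tm → Prop
  | beta (x : ℕ) (t u : Tm) : Beta (.app (.lam x t) u) (subst x u t)
  | appL {t t' : Tm} (u : Tm) : Beta t t' → Beta (.app t u) (.app t' u)
  | appR (t : Tm) {u u' : Tm} : Beta u u' → Beta (.app t u) (.app t u')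
  | lam (x : ℕ) {t t' : Tm} : Beta t t' → Beta (.lam x t) (.lam x t')

/-- Free variables. -/
def fv : Tm → Set ℕ
  | .var x => {x}
  | .lam x t => fv t \ {x}
  | .app t u => fv t ∪ fv u
  | .es x t u => (fv t \ {x}) ∪ fv u

/-- Rule kinds. -/
inductive Rule : Type
  | db : Rule
  | lsv : Rule
  | idr : ℕ → Rule
  | sub : ℕ → Tm → Rule

/-- Values are abstractions. -/
def IsValue : Tm → Prop := fun t => ∃ x b, t = .lam x b

/-- Structures under a set `φ` of frozen variables. -/
inductive Struct : Set ℕ → Tm → Prop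
  | var {φ x} : x ∈ φ → Struct φ (.var x)
  | app {φ t} (u : Tm) : Struct φ t → Struct φ (.app t u)
  | es {φ t} (x : ℕ) (u : Tm) : Struct φ t → Struct φ (.es x t u)
  | esS {φ t u} (x : ℕ) :
      Struct (insert x φ) t → Struct φ u → Struct φ (.es x t u)

/-- Auxiliary dB reduction (β at a distance). -/
inductive AuxDB : Tm → Tm → Prop
  | base (x : ℕ) (t u : Tm) : AuxDB (.app (.lam x t) u) (.es x t u)
  | sigma {t u s : Tm} (x : ℕ) (w : Tm) :
      AuxDB (.app t u) s → AuxDB (.app (.es x t w) u) (.es x s w)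

/-- Local normal forms `LNF φ ω μ t`. -/
inductive LNF : Set ℕ → Set ℕ → Bool → Tm → Prop
  | var {φ ω x} (μ : Bool) : x ∈ φ ∪ ω → LNF φ ω μ (.var x)
  | absTop {φ ω t} (x : ℕ) :
      LNF (insert x φ) ω true t → LNF φ ω true (.lam x t)
  | absBot {φ ω t} (x : ℕ) :
      LNF φ (insert x ω) false t → LNF φ ω false (.lam x t)
  | es {φ ω μ t} (x : ℕ) (u : Tm) : LNF φ ω μ t → LNF φ ω μ (.es x t u)
  | appPhi {φ ω μ t u} :
      LNF φ ω μ t → Struct φ t → LNF φ ω true u → LNF φ ω μ (.app t u)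
  | appOmega {φ ω μ t} (u : Tm) :
      LNF φ ω μ t → Struct ω t → LNF φ ω μ (.app t u)
  | esPhi {φ ω μ t u} (x : ℕ) :
      LNF (insert x φ) ω μ t → LNF φ ω false u → Struct φ u →
      LNF φ ω μ (.es x t u)
  | esOmega {φ ω μ t u} (x : ℕ) :
      LNF φ (insert x ω) μ t → Struct ω u → LNF φ ω μ (.es x t u)

mutual
/-- The reduction `t ⇒^{φ,μ}_ρ t'` of the restricted calculus λ_sn+
(identical to λ_sn except that lsv-base requires the substituted value to
be a local normal form). -/
inductive PRed : Rule → Set ℕ → Bool → Tm → Tm → Prop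
  | appLeft {ρ φ t t'} (μ : Bool) (u : Tm) :
      PRed ρ φ false t t' → PRed ρ φ μ (.app t u) (.app t' u)
  | appRight {ρ φ u u'} (μ : Bool) {t : Tm} :
      Struct φ t → PRed ρ φ true u u' → PRed ρ φ μ (.app t u) (.app t u')
  | absTop {ρ φ t t'} (x : ℕ) :
      PRed ρ (insert x φ) true t t' → PRed ρ φ true (.lam x t) (.lam x t')
  | absBot {ρ φ t t'} (x : ℕ) :
      PRed ρ φ false t t' → PRed ρ φ false (.lam x t) (.lam x t')
  | esLeft {ρ φ μ t t'} (x : ℕ) (u : Tm) :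
      PRed ρ φ μ t t' → PRed ρ φ μ (.es x t u) (.es x t' u)
  | esLeftS {ρ φ μ t t' u} (x : ℕ) :
      PRed ρ (insert x φ) μ t t' → Struct φ u →
      PRed ρ φ μ (.es x t u) (.es x t' u)
  | esRight {ρ φ μ u u'} (x : ℕ) {t : Tm} :
      PRed (.idr x) φ μ t t → PRed ρ φ false u u' →
      PRed ρ φ μ (.es x t u) (.es x t u')
  | idr (φ : Set ℕ) (μ : Bool) (x : ℕ) : PRed (.idr x) φ μ (.var x) (.var x)
  | sub (φ : Set ℕ) (μ : Bool) (x : ℕ) (v : Tm) : PRed (.sub x v) φ μ (.var x) v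
  | db {φ μ t t'} : AuxDB t t' → PRed .db φ μ t t'
  | lsv {φ μ t t'} : PAuxLSV φ μ t t' → PRed .lsv φ μ t t'

/-- Auxiliary lsv reduction of λ_sn+: the base case additionally requires
the substituted value to be in local normal form `LNF φ ∅ ⊥`. -/
inductive PAuxLSV : Set ℕ → Bool → Tm → Tm → Prop
  | base {φ μ t t'} (x : ℕ) {v : Tm} :
      PRed (.sub x v) φ μ t t' → IsValue v → LNF φ ∅ false v →
      PAuxLSV φ μ (.es x t v) (.es x t' v)
  | sigma {φ μ t u t'} (x y : ℕ) (w : Tm) :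
      PAuxLSV φ μ (.es x t u) t' →
      PAuxLSV φ μ (.es x t (.es y u w)) (.es y t' w)
  | sigmaS {φ μ t u t' w} (x y : ℕ) :
      PAuxLSV (insert y φ) μ (.es x t u) t' → Struct φ w →
      PAuxLSV φ μ (.es x t (.es y u w)) (.es y t' w)
end

/-- The variable a `sub`/`id` rule kind applies to, if any. -/
def Rule.varOf : Rule → Option ℕ
  | .db => none
  | .lsv => none
  | .idr x => some x
  | .sub x _ => some x

/-!
An `id(x)` probe only ever consults the frozen set through the structure side conditions of
`app-right` and `es-left-S`. So strengthen more generally: dropping a frozen variable `y` from an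
`x`-probe leaves either an `x`-probe or a `y`-probe. When a structure condition fails once `y` is
removed, the term in question is a structure under `φ ∪ {y}` but not under `φ`, hence contains `y`
at a reducible position and is itself a `y`-probe. Taking `y = x` gives the theorem.
-/

theorem PRed.idr_eq {x : ℕ} {φ : Set ℕ} {μ : Bool} {t t' : Tm}
    (h : PRed (.idr x) φ μ t t') : t' = t := by
  induction t generalizing φ μ t' with
  | var => cases h; rfl
  | lam z t ih =>
    cases h with
    | absTop _ h | absBot _ h => rw [ih h]
  | app t u iht ihu =>
    cases h with
    | appLeft _ _ h => rw [iht h]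
    | appRight _ _ h => rw [ihu h]
  | es z t u iht ihu =>
    cases h with
    | esLeft _ _ h | esLeftS _ h _ => rw [iht h]
    | esRight _ _ h => rw [ihu h]

theorem pred_idr_of_struct_insert_of_not_struct {x : ℕ} {ψ : Set ℕ} {t : Tm}
    (hins : Struct (insert x ψ) t) (hnot : ¬ Struct ψ t) (φ : Set ℕ) (μ : Bool) :
    PRed (.idr x) φ μ t t := by
  induction t generalizing x ψ μ with
  | var v =>
    cases hins with
    | var hv =>
      obtain rfl | hv := hv
      · exact .idr φ μ _
      · exact absurd (.var hv) hnot
  | lam => cases hins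
  | app t u iht =>
    cases hins with
    | app _ ht => exact .appLeft μ u (iht ht (hnot ∘ .app u) false)
  | es z t u iht ihu =>
    cases hins with
    | es _ _ ht => exact .esLeft z u (iht ht (hnot ∘ .es z u) μ)
    | esS _ ht hu =>
      by_cases htz : Struct (insert z ψ) t
      · exact .esRight z (iht htz (hnot ∘ .es z u) μ) (ihu hu (hnot ∘ .esS z htz) false)
      · rw [Set.insert_comm] at ht
        exact .esLeft z u (iht ht htz μ)

theorem PRed.idr_strengthen_or {x y : ℕ} {φ : Set ℕ} {μ : Bool} {t : Tm}
    (h : PRed (.idr x) (insert y φ) μ t t) :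
    PRed (.idr x) φ μ t t ∨ PRed (.idr y) φ μ t t := by
  induction t generalizing x y φ μ with
  | var v => cases h; exact .inl (.idr φ μ v)
  | lam z t ih =>
    cases h with
    | absTop _ h =>
      rw [Set.insert_comm] at h
      exact (ih h).imp (.absTop z) (.absTop z)
    | absBot _ h => exact (ih h).imp (.absBot z) (.absBot z)
  | app t u iht ihu =>
    cases h with
    | appLeft _ _ h => exact (iht h).imp (.appLeft μ u) (.appLeft μ u)
    | appRight _ hS h =>
      by_cases ht : Struct φ t
      · exact (ihu h).imp (.appRight μ ht) (.appRight μ ht)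
      · exact .inr (.appLeft μ u (pred_idr_of_struct_insert_of_not_struct hS ht φ false))
  | es z t u iht ihu =>
    cases h with
    | esLeft _ _ h => exact (iht h).imp (.esLeft z u) (.esLeft z u)
    | esLeftS _ h hS =>
      rw [Set.insert_comm] at h
      by_cases hu : Struct φ u
      · exact (iht h).imp (.esLeftS z · hu) (.esLeftS z · hu)
      · -- `u` is a `y`-probe, so `z` can also be dropped from the frozen set of `t`.
        have hu' := pred_idr_of_struct_insert_of_not_struct hS hu φ false
        have drop_z : ∀ {w}, PRed (.idr w) (insert z φ) μ t t →
            PRed (.idr w) φ μ (.es z t u) (.es z t u) ∨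
              PRed (.idr y) φ μ (.es z t u) (.es z t u) :=
          fun hw => (iht hw).imp (.esLeft z u) (.esRight z · hu')
        exact (iht h).elim drop_z fun hy => .inr ((drop_z hy).elim id id)
    | esRight _ ht h =>
      obtain ht | ht := iht ht
      · exact (ihu h).imp (.esRight z ht) (.esRight z ht)
      · exact .inr (.esLeft z u ht)

/-- Strengthening for the id probe. -/
theorem pred_id_strengthening {φ : Set ℕ} {μ : Bool} {x : ℕ} {t t' : Tm}
    (hred : PRed (.idr x) (insert x φ) μ t t') :
    PRed (.idr x) φ μ t t' := by
  obtain rfl := hred.idr_eq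
  exact hred.idr_strengthen_or.elim id id
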